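/- The class of cographs is closed under Seidel minors: if G is a cograph and H is a Seidel minor of G, then H is a cograph. -/

import Mathlib

universe u

/-- The Seidel complement of `G` at `v`: adjacency between the open neighborhood of `v`
and the set of vertices different from `v` and not adjacent to `v` is complemented,
all other adjacencies are unchanged. -/
def seidelCompl {V : Type u} (G : SimpleGraph V) (v : V) : SimpleGraph V where
  Adj x y := x ≠ y ∧
    Xor' (G.Adj x y)
      ((G.Adj v x ∧ ¬ G.Adj v y ∧ y ≠ v) ∨ (G.Adj v y ∧ ¬ G.Adj v x ∧ x ≠ v))
  symm := ⟨by
    rintro x y ⟨hxy, h⟩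
    refine ⟨hxy.symm, ?_⟩
    have h1 : G.Adj x y ↔ G.Adj y x := G.adj_comm x y
    unfold Xor' Xor at h ⊢
    tauto⟩
  loopless := ⟨fun x h => h.1 rfl⟩

/-- A cograph: a graph with no induced subgraph isomorphic to `P₄`,
the path on four vertices. -/
def IsCograph {V : Type u} (G : SimpleGraph V) : Prop :=
  IsEmpty (SimpleGraph.pathGraph 4 ↪g G)

/-- `SeidelMinor H G` : a graph isomorphic to `H` can be obtained from `G` by a finite
sequence of Seidel complementations and vertex deletions. -/
inductive SeidelMinor : ∀ {U V : Type u}, SimpleGraph U → SimpleGraph V → Prop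
  | iso {U V : Type u} {H : SimpleGraph U} {G : SimpleGraph V} (e : H ≃g G) :
      SeidelMinor H G
  | seidel {U V : Type u} {H : SimpleGraph U} {G : SimpleGraph V} (v : V)
      (h : SeidelMinor H (seidelCompl G v)) : SeidelMinor H G
  | delete {U V : Type u} {H : SimpleGraph U} {G : SimpleGraph V} (v : V)
      (h : SeidelMinor H (G.induce {u : V | u ≠ v})) : SeidelMinor H G

/-!
Induced subgraphs of cographs are cographs, so it suffices to show that `G * v` is a cograph
whenever `G` is. Since `v` has the same neighbourhood in `G` and in `G * v`, complementing at `v`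
is an involution, and it is enough to turn an induced `P₄` of `H` into one of `H * v`.
Seidel complementation commutes with passing to an induced subgraph containing `v`, so only the
`P₄` together with `v` matters: either `v` lies on the path, or the path carries an extra apex `v`
adjacent to some set `A` of its vertices. A direct check of these 4 + 16 small graphs finds an
induced `P₄` in each of them after complementing at `v`.
-/

open SimpleGraph

variable {V V' : Type*}

theorem seidelCompl_adj {G : SimpleGraph V} {v x y : V} :
    (seidelCompl G v).Adj x y ↔ x ≠ y ∧
      Xor (G.Adj x y)
        ((G.Adj v x ∧ ¬ G.Adj v y ∧ y ≠ v) ∨ (G.Adj v y ∧ ¬ G.Adj v x ∧ x ≠ v)) :=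
  Iff.rfl

theorem seidelCompl_adj_self {G : SimpleGraph V} {v x : V} :
    (seidelCompl G v).Adj v x ↔ G.Adj v x := by
  grind [seidelCompl_adj, SimpleGraph.irrefl]

theorem seidelCompl_seidelCompl (G : SimpleGraph V) (v : V) :
    seidelCompl (seidelCompl G v) v = G := by
  ext x y
  grind [seidelCompl_adj, seidelCompl_adj_self, SimpleGraph.irrefl]

instance (G : SimpleGraph V) [DecidableEq V] [DecidableRel G.Adj] (v : V) :
    DecidableRel (seidelCompl G v).Adj := fun _ _ =>
  decidable_of_iff' _ seidelCompl_adj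

namespace SimpleGraph

instance (n : ℕ) : DecidableRel (pathGraph n).Adj := fun _ _ =>
  decidable_of_iff' _ pathGraph_adj

def addApex (G : SimpleGraph V) (A : Set V) : SimpleGraph (Option V) where
  Adj
    | none, none => False
    | none, some x | some x, none => x ∈ A
    | some x, some y => G.Adj x y
  symm := ⟨fun
    | none, none, h | none, some _, h | some _, none, h => h
    | some _, some _, h => h.symm⟩
  loopless := ⟨fun
    | none, h => h
    | some x, h => G.loopless.irrefl x h⟩

instance (G : SimpleGraph V) [DecidableRel G.Adj] (A : Set V) [∀ x, Decidable (x ∈ A)] :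
    DecidableRel (G.addApex A).Adj
  | none, none => inferInstanceAs (Decidable False)
  | none, some x | some x, none => inferInstanceAs (Decidable (x ∈ A))
  | some x, some y => inferInstanceAs (Decidable (G.Adj x y))

def IsInducedPath4 (G : SimpleGraph V) (a b c d : V) : Prop :=
  G.Adj a b ∧ G.Adj b c ∧ G.Adj c d ∧ ¬ G.Adj a c ∧ ¬ G.Adj a d ∧ ¬ G.Adj b d

instance (G : SimpleGraph V) [DecidableRel G.Adj] (a b c d : V) :
    Decidable (G.IsInducedPath4 a b c d) := by
  unfold IsInducedPath4; infer_instance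

theorem IsInducedPath4.nonempty_embedding {G : SimpleGraph V} {a b c d : V}
    (h : G.IsInducedPath4 a b c d) : Nonempty (pathGraph 4 ↪g G) := by
  obtain ⟨hab, hbc, hcd, hac, had, hbd⟩ := h
  have hac' : a ≠ c := by rintro rfl; exact had hcd
  have had' : a ≠ d := by rintro rfl; exact hac hcd.symm
  have hbd' : b ≠ d := by rintro rfl; exact had hab
  refine ⟨⟨⟨![a, b, c, d], ?_⟩, ?_⟩⟩
  · intro i j hij
    fin_cases i <;> fin_cases j <;> simp_all [hab.ne, hbc.ne, hcd.ne, eq_comm]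
  · intro i j
    change G.Adj (![a, b, c, d] i) (![a, b, c, d] j) ↔ _
    fin_cases i <;> fin_cases j <;>
      simp [pathGraph_adj, G.adj_comm _ a, G.adj_comm d, G.adj_comm c b, *]

namespace Embedding

variable {G' : SimpleGraph V'} {G : SimpleGraph V}

def seidelCompl (f : G' ↪g G) (v : V') :
    _root_.seidelCompl G' v ↪g _root_.seidelCompl G (f v) where
  toEmbedding := f.toEmbedding
  map_rel_iff' := by
    intro x y
    simp only [RelEmbedding.coe_toEmbedding, seidelCompl_adj, f.map_adj_iff, ne_eq,
      f.injective.eq_iff]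

def addApex (f : G' ↪g G) {v : V} (hv : v ∉ Set.range f) :
    G'.addApex {x | G.Adj v (f x)} ↪g G where
  toFun o := o.elim v f
  inj' := by
    rintro (_ | x) (_ | y) h
    · rfl
    · exact (hv ⟨y, h.symm⟩).elim
    · exact (hv ⟨x, h⟩).elim
    · exact congrArg some (f.injective h)
  map_rel_iff' := by
    rintro (_ | x) (_ | y)
    · simp [SimpleGraph.addApex]
    · rfl
    · exact G.adj_comm _ _
    · exact f.map_adj_iff

end Embedding

end SimpleGraph

theorem nonempty_pathGraph_embedding_seidelCompl_pathGraph (k : Fin 4) :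
    Nonempty (pathGraph 4 ↪g seidelCompl (pathGraph 4) k) := by
  have key : ∀ k : Fin 4, ∃ a b c d, (seidelCompl (pathGraph 4) k).IsInducedPath4 a b c d := by
    decide +kernel
  obtain ⟨a, b, c, d, h⟩ := key k
  exact h.nonempty_embedding

theorem nonempty_pathGraph_embedding_seidelCompl_addApex (A : Set (Fin 4)) :
    Nonempty (pathGraph 4 ↪g seidelCompl ((pathGraph 4).addApex A) none) := by
  classical
  have key : ∀ A : Finset (Fin 4), ∃ a b c d,
      (seidelCompl ((pathGraph 4).addApex A) none).IsInducedPath4 a b c d := by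
    decide +kernel
  obtain ⟨a, b, c, d, h⟩ := key A.toFinset
  rw [Set.coe_toFinset] at h
  exact h.nonempty_embedding

theorem IsCograph.of_embedding {G' : SimpleGraph V'} {G : SimpleGraph V} (f : G' ↪g G)
    (hG : IsCograph G) : IsCograph G' :=
  ⟨fun e => hG.elim (f.comp e)⟩

theorem IsCograph.of_seidelCompl {H : SimpleGraph V} {v : V}
    (h : IsCograph (seidelCompl H v)) : IsCograph H := by
  refine ⟨fun e => ?_⟩
  by_cases hv : v ∈ Set.range e
  · obtain ⟨k, rfl⟩ := hv
    obtain ⟨p⟩ := nonempty_pathGraph_embedding_seidelCompl_pathGraph k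
    exact h.elim ((e.seidelCompl k).comp p)
  · obtain ⟨p⟩ := nonempty_pathGraph_embedding_seidelCompl_addApex {x | H.Adj v (e x)}
    exact h.elim (((e.addApex hv).seidelCompl none).comp p)

theorem IsCograph.seidelCompl {G : SimpleGraph V} (hG : IsCograph G) (v : V) :
    IsCograph (seidelCompl G v) :=
  IsCograph.of_seidelCompl (v := v) (by rwa [seidelCompl_seidelCompl])

theorem isCograph_of_seidelMinor_general {W V : Type u}
    (G : SimpleGraph V) (H : SimpleGraph W)
    (hG : IsCograph G) (hHG : SeidelMinor H G) : IsCograph H := by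
  induction hHG with
  | iso e => exact hG.of_embedding e.toEmbedding
  | seidel v _ ih => exact ih (hG.seidelCompl v)
  | delete v _ ih => exact ih (hG.of_embedding (Embedding.induce _))

/-- Cographs are closed under Seidel minors. -/
theorem isCograph_of_seidelMinor {W V : Type u} [Fintype W] [Fintype V]
    (G : SimpleGraph V) (H : SimpleGraph W)
    (hG : IsCograph G) (hHG : SeidelMinor H G) : IsCograph H :=
  isCograph_of_seidelMinor_general G H hG hHG
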